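/- arXiv:1710.01936 — 3 statements merged into one kernel-verified Lean document; each statement's English description precedes it below -/
import Mathlib

section
/- Let p ≥ 7 be prime and a ∈ [3, p-3]. Then the argument of the Fourier coefficient F_{I'}(1) = Σ_{x ∈ I'} e^{-2πix/p}, where I' = {0,1,...,a-2} ∪ {a} ⊆ Z_p, is not an integer multiple of π/p. -/
/-- Fourier coefficient `F_A(γ) = ∑_{x ∈ A} ω^{-xγ}` with `ω = e^{2πi/p}`. -/
noncomputable def Fc {p : ℕ} [NeZero p] (A : Finset (ZMod p)) (γ : ZMod p) : ℂ :=
  ∑ x ∈ A, Complex.exp (-(2 * Real.pi * Complex.I) * ((x.val * γ.val : ℕ) : ℂ) / p)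

/-- The punctured interval `I' = {0, ..., a-2, a}` in `ZMod p`. -/
def puncturedInterval (p a : ℕ) : Finset (ZMod p) :=
  insert (a : ZMod p) ((Finset.range (a - 1)).image (fun j : ℕ => (j : ZMod p)))

/-!
Write `θ = π / p`. If `arg F_{I'}(1) = nθ`, then `e^{-inθ} F_{I'}(1)` is real, so
`∑_{c ∈ I'} sin((2c + n)θ) = 0`. Summing the sines over the interval part in closed form turns
this into `sin((s - 2)θ) sin((a - 1)θ) + sin((s + a)θ) sin θ = 0` with `s = n + a`, an expression
that only changes sign under `s ↦ s + p`. For `s ∈ [2, p + 1]` it is nonzero: both products are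
nonnegative and not both zero when `s + a ≤ p`; the same holds for the equal expression
`sin(sθ) sin((a + 1)θ) - sin((s + a - 2)θ) sin θ` when `s + a ≥ p + 2`; and at the two remaining
values it reduces to `sin((a + 1)θ) sin((a - 1)θ) - sin²θ > 0` and to `-2 sin²θ cos(aθ)`, where
`cos(aθ) ≠ 0` because `p` is odd.
-/

open Real Finset

section Trigonometry

theorem sum_range_sin_mul_sin (x θ : ℝ) (m : ℕ) :
    (∑ j ∈ range m, sin (x + 2 * j * θ)) * sin θ = sin (x + (m - 1) * θ) * sin (m * θ) := by
  induction m with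
  | zero => simp
  | succ m ih =>
    rw [sum_range_succ, add_mul, ih]
    push_cast
    linear_combination (norm := ring_nf) (two_mul_sin_mul_sin (x + (m - 1) * θ) (m * θ)
      + two_mul_sin_mul_sin (x + 2 * m * θ) θ - two_mul_sin_mul_sin (x + m * θ) ((m + 1) * θ)) / 2

variable {k p : ℝ}

theorem sin_mul_pi_div_pos (hk : 0 < k) (hkp : k < p) : 0 < sin (k * (π / p)) := by
  have hp : 0 < p := hk.trans hkp
  refine sin_pos_of_pos_of_lt_pi (by positivity) ?_
  calc k * (π / p) < p * (π / p) := by gcongr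
    _ = π := by field_simp

theorem sin_pi_div_pos (hp : 1 < p) : 0 < sin (π / p) := by
  simpa only [one_mul] using sin_mul_pi_div_pos one_pos hp

theorem sin_mul_pi_div_nonneg (hp : 0 < p) (hk : 0 ≤ k) (hkp : k ≤ p) :
    0 ≤ sin (k * (π / p)) := by
  refine sin_nonneg_of_nonneg_of_le_pi (by positivity) ?_
  calc k * (π / p) ≤ p * (π / p) := by gcongr
    _ = π := by field_simp

theorem sin_mul_pi_div_nonpos (hp : 0 < p) (hk : p ≤ k) (hkp : k ≤ 2 * p) :
    sin (k * (π / p)) ≤ 0 := by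
  have h := sin_mul_pi_div_nonneg hp (sub_nonneg.mpr hk) (by linarith : k - p ≤ p)
  rwa [sub_mul, show p * (π / p) = π by field_simp, sin_sub_pi, neg_nonneg] at h

theorem sin_mul_pi_div_neg (hk : p < k) (hkp : k < 2 * p) : sin (k * (π / p)) < 0 := by
  have hp : 0 < p := by linarith
  have h := sin_mul_pi_div_pos (sub_pos.mpr hk) (by linarith : k - p < p)
  rwa [sub_mul, show p * (π / p) = π by field_simp, sin_sub_pi, neg_pos] at h

theorem sin_pi_div_lt_sin_mul (hk : 1 < k) (hkp : k < p - 1) :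
    sin (π / p) < sin (k * (π / p)) := by
  have hp : 0 < p := by linarith
  have hθ : 0 < π / p := by positivity
  have hpθ : p * (π / p) = π := by field_simp
  rw [← sub_pos, sin_sub_sin]
  refine mul_pos (mul_pos two_pos (sin_pos_of_pos_of_lt_pi ?_ ?_)) (cos_pos_of_mem_Ioo ⟨?_, ?_⟩)
  · nlinarith
  · nlinarith
  · nlinarith
  · nlinarith

theorem cos_int_mul_pi_div_ne_zero {p : ℕ} (hp : Odd p) (a : ℤ) : cos (a * (π / p)) ≠ 0 := by
  intro h
  obtain ⟨k, hk⟩ := cos_eq_zero_iff.mp h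
  have hp0 : (p : ℝ) ≠ 0 := by exact_mod_cast hp.pos.ne'
  have hreal : (2 * a : ℝ) = (2 * k + 1) * p := by
    field_simp at hk
    nlinarith [pi_pos]
  have hint : 2 * a = 2 * (k * p) + p := by
    have : (2 * a : ℤ) = (2 * k + 1) * p := by exact_mod_cast hreal
    linear_combination this
  obtain ⟨t, rfl⟩ := hp
  push_cast at hint
  omega

end Trigonometry

theorem sum_sin_sub_arg_sum_exp_eq_zero {ι : Type*} (S : Finset ι) (x : ι → ℝ) :
    ∑ i ∈ S, sin (x i - Complex.arg (∑ i ∈ S, Complex.exp (x i * Complex.I))) = 0 := by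
  set z := ∑ i ∈ S, Complex.exp (x i * Complex.I)
  have hreal : z * Complex.exp (-(z.arg * Complex.I)) = ‖z‖ := by
    calc z * Complex.exp (-(z.arg * Complex.I))
        = ‖z‖ * Complex.exp (z.arg * Complex.I) * Complex.exp (-(z.arg * Complex.I)) := by
          rw [Complex.norm_mul_exp_arg_mul_I]
      _ = ‖z‖ := by rw [mul_assoc, ← Complex.exp_add, add_neg_cancel, Complex.exp_zero, mul_one]
  have him := congrArg Complex.im hreal
  rw [Complex.ofReal_im, sum_mul, Complex.im_sum] at him
  simpa only [← Complex.exp_add, ← sub_eq_add_neg, ← sub_mul, ← Complex.ofReal_sub,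
    Complex.exp_ofReal_mul_I_im] using him

theorem puncturedInterval_eq_image (p a : ℕ) :
    puncturedInterval p a = (insert a (range (a - 1))).image (Nat.cast : ℕ → ZMod p) := by
  rw [image_insert]
  rfl

theorem Fc_image_natCast_one {p : ℕ} [NeZero p] (hp : 1 < p) (S : Finset ℕ)
    (hS : ∀ c ∈ S, c < p) :
    Fc (S.image (Nat.cast : ℕ → ZMod p)) 1
      = ∑ c ∈ S, Complex.exp (↑(-(2 * c) * (π / p)) * Complex.I) := by
  have : Fact (1 < p) := ⟨hp⟩
  rw [Fc, sum_image fun c hc d hd h => by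
    simpa only [ZMod.val_cast_of_lt (hS c hc), ZMod.val_cast_of_lt (hS d hd)] using
      congrArg ZMod.val h]
  refine sum_congr rfl fun c hc => ?_
  rw [ZMod.val_one, mul_one, ZMod.val_cast_of_lt (hS c hc)]
  congr 1
  push_cast
  ring

/-- `sin θ · ∑_{c ∈ I'} sin ((2c + s - a) θ)` for `θ = π / p`, in closed form. -/
noncomputable def puncturedSineSum (p a : ℕ) (s : ℤ) : ℝ :=
  sin ((s - 2) * (π / p)) * sin ((a - 1) * (π / p)) + sin ((s + a) * (π / p)) * sin (π / p)

theorem sum_sin_insert_range_mul_sin (p a : ℕ) (ha : 1 ≤ a) (n : ℤ) :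
    (∑ c ∈ insert a (range (a - 1)), sin ((2 * c + n) * (π / p))) * sin (π / p)
      = puncturedSineSum p a (n + a) := by
  have hshift : ∀ j : ℕ, (2 * j + n) * (π / p) = n * (π / p) + 2 * j * (π / p) := fun j => by ring
  rw [sum_insert (by simp), add_mul, add_comm]
  simp only [hshift, sum_range_sin_mul_sin, puncturedSineSum]
  push_cast [Nat.cast_sub ha]
  ring_nf

section puncturedSineSum

variable {p a : ℕ}

theorem puncturedSineSum_add_mul (hp : p ≠ 0) (s q : ℤ) :
    puncturedSineSum p a (s + p * q) = (-1) ^ q * puncturedSineSum p a s := by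
  have hshift : ∀ t : ℝ, (t + p * q) * (π / p) = t * (π / p) + q * π := fun t => by
    field_simp
  simp only [puncturedSineSum]
  push_cast
  rw [show (s + p * q - 2 : ℝ) = s - 2 + p * q by ring,
    show (s + p * q + a : ℝ) = s + a + p * q by ring, hshift, hshift, sin_add_int_mul_pi,
    sin_add_int_mul_pi]
  ring

theorem puncturedSineSum_pos_of_add_le (ha : 2 ≤ a) (hap : a + 3 ≤ p) {s : ℤ} (hs : 2 ≤ s)
    (hsa : s + a ≤ p) :
    0 < puncturedSineSum p a s := by
  have hs' : (2 : ℝ) ≤ s := by exact_mod_cast hs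
  have hsa' : (s + a : ℝ) ≤ p := by exact_mod_cast hsa
  have ha' : (2 : ℝ) ≤ a := by exact_mod_cast ha
  have hap' : (a + 3 : ℝ) ≤ p := by exact_mod_cast hap
  have hp : (0 : ℝ) < p := by linarith
  have hsin₁ := sin_pi_div_pos (p := p) (by linarith)
  have hsin₂ := sin_mul_pi_div_pos (p := p) (k := a - 1) (by linarith) (by linarith)
  have hsin₃ := sin_mul_pi_div_nonneg (p := p) (k := s - 2) hp (by linarith) (by linarith)
  have hsin₄ := sin_mul_pi_div_nonneg (p := p) (k := s + a) hp (by linarith) hsa'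
  unfold puncturedSineSum
  rcases hsa'.lt_or_eq with hlt | heq
  · nlinarith [mul_pos (sin_mul_pi_div_pos (by linarith) hlt) hsin₁]
  · have hsin₅ := sin_mul_pi_div_pos (p := p) (k := s - 2) (by linarith) (by linarith)
    nlinarith [mul_pos hsin₅ hsin₂]

theorem puncturedSineSum_pos_of_le_add (ha : 3 ≤ a) (hap : a + 2 ≤ p) {s : ℤ}
    (hsa : p + 2 ≤ s + a) (hs : s ≤ p) :
    0 < puncturedSineSum p a s := by
  have hs' : (s : ℝ) ≤ p := by exact_mod_cast hs
  have hsa' : (p + 2 : ℝ) ≤ s + a := by exact_mod_cast hsa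
  have ha' : (3 : ℝ) ≤ a := by exact_mod_cast ha
  have hap' : (a + 2 : ℝ) ≤ p := by exact_mod_cast hap
  have hp : (0 : ℝ) < p := by linarith
  have hprod : puncturedSineSum p a s = sin (s * (π / p)) * sin ((a + 1) * (π / p))
      - sin ((s + a - 2) * (π / p)) * sin (π / p) := by
    unfold puncturedSineSum
    set θ := π / p
    linear_combination (norm := ring_nf) (two_mul_sin_mul_sin ((s - 2) * θ) ((a - 1) * θ)
      + two_mul_sin_mul_sin ((s + a) * θ) θ - two_mul_sin_mul_sin (s * θ) ((a + 1) * θ)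
      + two_mul_sin_mul_sin ((s + a - 2) * θ) θ) / 2
  have hsin₁ := sin_pi_div_pos (p := p) (by linarith)
  have hsin₂ := sin_mul_pi_div_pos (p := p) (k := a + 1) (by linarith) (by linarith)
  have hsin₃ := sin_mul_pi_div_nonneg (p := p) (k := s) hp (by linarith) hs'
  have hsin₄ := sin_mul_pi_div_nonpos (p := p) (k := s + a - 2) hp (by linarith) (by linarith)
  rw [hprod]
  rcases hs'.lt_or_eq with hlt | heq
  · nlinarith [mul_pos (sin_mul_pi_div_pos (by linarith) hlt) hsin₂]
  · have hneg := sin_mul_pi_div_neg (p := p) (k := s + a - 2) (by linarith) (by linarith)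
    nlinarith [mul_pos (neg_pos.mpr hneg) hsin₁]

theorem puncturedSineSum_pos_of_add_eq (ha : 3 ≤ a) (hap : a + 3 ≤ p) {s : ℤ}
    (hsa : s + a = p + 1) : 0 < puncturedSineSum p a s := by
  have hsa' : (s + a : ℝ) = p + 1 := by exact_mod_cast hsa
  have ha' : (3 : ℝ) ≤ a := by exact_mod_cast ha
  have hap' : (a + 3 : ℝ) ≤ p := by exact_mod_cast hap
  have hp : (p : ℝ) ≠ 0 := by linarith
  have hsum : puncturedSineSum p a s
      = sin ((a + 1) * (π / p)) * sin ((a - 1) * (π / p)) - sin (π / p) * sin (π / p) := by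
    unfold puncturedSineSum
    set θ := π / p with hθ
    have hpθ : p * θ = π := by rw [hθ]; field_simp
    rw [show (s - 2 : ℝ) * θ = π - (a + 1) * θ by linear_combination θ * hsa' + hpθ,
      show (s + a : ℝ) * θ = θ + π by linear_combination θ * hsa' + hpθ, sin_pi_sub, sin_add_pi]
    ring
  have hsin₁ := sin_pi_div_pos (p := p) (by linarith)
  rw [hsum, sub_pos]
  exact mul_lt_mul'' (sin_pi_div_lt_sin_mul (by linarith) (by linarith))
    (sin_pi_div_lt_sin_mul (by linarith) (by linarith)) hsin₁.le hsin₁.le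

theorem puncturedSineSum_natCast_add_one (hp : p ≠ 0) :
    puncturedSineSum p a (p + 1) = -(2 * sin (π / p) ^ 2 * cos (a * (π / p))) := by
  have hp' : (p : ℝ) ≠ 0 := by exact_mod_cast hp
  unfold puncturedSineSum
  push_cast
  set θ := π / p with hθ
  have hpθ : p * θ = π := by rw [hθ]; field_simp
  rw [show (p + 1 - 2 : ℝ) * θ = π - θ by linear_combination hpθ,
    show (p + 1 + a : ℝ) * θ = a * θ + θ + π by linear_combination hpθ,
    show (a - 1 : ℝ) * θ = a * θ - θ by ring, sin_pi_sub, sin_add_pi, sin_add, sin_sub]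
  ring

theorem puncturedSineSum_ne_zero (hp : Odd p) (ha : 3 ≤ a) (hap : a + 3 ≤ p) (s : ℤ) :
    puncturedSineSum p a s ≠ 0 := by
  have hp₀ : p ≠ 0 := hp.pos.ne'
  obtain ⟨r, q, rfl, hr₂, hrp⟩ : ∃ r q : ℤ, s = r + p * q ∧ 2 ≤ r ∧ r ≤ p + 1 :=
    ⟨2 + (s - 2) % p, (s - 2) / p, by linarith [Int.emod_add_mul_ediv (s - 2) p],
      by linarith [Int.emod_nonneg (s - 2) (by omega : (p : ℤ) ≠ 0)],
      by linarith [Int.emod_lt_of_pos (s - 2) (by omega : (0 : ℤ) < p)]⟩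
  rw [puncturedSineSum_add_mul hp₀, mul_ne_zero_iff]
  refine ⟨zpow_ne_zero _ (by norm_num), ?_⟩
  obtain h | h | ⟨h, h'⟩ | rfl :
      r + a ≤ p ∨ r + a = p + 1 ∨ (p + 2 ≤ r + a ∧ r ≤ p) ∨ r = p + 1 := by omega
  · exact (puncturedSineSum_pos_of_add_le (by omega) hap hr₂ h).ne'
  · exact (puncturedSineSum_pos_of_add_eq ha hap h).ne'
  · exact (puncturedSineSum_pos_of_le_add ha (by omega) h h').ne'
  · rw [puncturedSineSum_natCast_add_one hp₀, neg_ne_zero]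
    have hsin := sin_pi_div_pos (p := p) (by exact_mod_cast (by omega : 1 < p))
    have hcos := cos_int_mul_pi_div_ne_zero hp a
    rw [Int.cast_natCast] at hcos
    positivity

end puncturedSineSum

theorem stmt_9_general (p : ℕ) (hp : p.Prime) [NeZero p]
    (a : ℕ) (ha : 3 ≤ a) (ha' : a ≤ p - 3) :
    ¬ ∃ n : ℤ, Complex.arg (Fc (puncturedInterval p a) 1) = n * Real.pi / p := by
  rintro ⟨n, hn⟩
  have hsum := sum_sin_sub_arg_sum_exp_eq_zero (insert a (range (a - 1)))
    fun c : ℕ => -(2 * c) * (π / p)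
  rw [← Fc_image_natCast_one (by omega) _ (by simp only [mem_insert, mem_range]; omega),
    ← puncturedInterval_eq_image, hn] at hsum
  have hsin : ∑ c ∈ insert a (range (a - 1)), sin ((2 * c + n) * (π / p)) = 0 := by
    rw [← neg_eq_zero, ← sum_neg_distrib, ← hsum]
    refine sum_congr rfl fun c _ => ?_
    rw [← sin_neg]
    ring_nf
  refine puncturedSineSum_ne_zero (hp.odd_of_ne_two (by omega)) ha (by omega) (n + a) ?_
  rw [← sum_sin_insert_range_mul_sin p a (by omega) n, hsin, zero_mul]

theorem stmt_9 (p : ℕ) (hp : p.Prime) [NeZero p] (hp7 : 7 ≤ p)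
    (a : ℕ) (ha : 3 ≤ a) (ha' : a ≤ p - 3) :
    ¬ ∃ n : ℤ, Complex.arg (Fc (puncturedInterval p a) 1) = n * Real.pi / p :=
  stmt_9_general p hp a ha ha'
end

section
/- Let p ≥ 7 be prime and a ∈ {3,...,p-3}. Then the interval I = {0,...,a-1} ⊆ Z_p and the punctured interval I' = {0,...,a-2} ∪ {a} ⊆ Z_p are not affine equivalent: there is no ξ ≠ 0 and η in Z_p with ξ·I' + η = I. -/
/-- The interval `[a] = {0, 1, ..., a-1}` in `ZMod p`. -/
def initInterval (p a : ℕ) : Finset (ZMod p) :=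
  (Finset.range a).image (fun j : ℕ => (j : ZMod p))

section Aux

variable {p : ℕ}

lemma castInjOn (S : Finset ℕ) (hS : ∀ j ∈ S, j < p) :
    Set.InjOn (fun j : ℕ => (j : ZMod p)) ↑S := by
  intro x hx y hy h
  have hx' := hS x hx
  have hy' := hS y hy
  have h2 : x % p = y % p := (ZMod.natCast_eq_natCast_iff x y p).mp h
  rwa [Nat.mod_eq_of_lt hx', Nat.mod_eq_of_lt hy'] at h2

/-- General counting lemma: the number of elements of the cast image of `S ⊆ [0,p)`
that stay in it after shifting by `k` equals a count over naturals. -/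
lemma count_general (hp : 0 < p) (S : Finset ℕ) (hS : ∀ j ∈ S, j < p) (k : ℕ) :
    ((S.image (fun j : ℕ => (j : ZMod p))) ∩
      ((S.image (fun j : ℕ => (j : ZMod p))).image (fun x => x + (k : ZMod p)))).card
    = (S.filter (fun j => (j + k) % p ∈ S)).card := by
  classical
  set g : ℕ → ℕ := fun j => (j + k) % p with hg
  have hmodlt : ∀ j, g j < p := fun j => Nat.mod_lt _ hp
  have hginj : Set.InjOn g ↑S := by
    intro x hx y hy h
    have h2 : (x + k) % p = (y + k) % p := h
    have h3 : x % p = y % p := Nat.ModEq.add_right_cancel' k h2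
    rwa [Nat.mod_eq_of_lt (hS x hx), Nat.mod_eq_of_lt (hS y hy)] at h3
  have hcast : Set.InjOn (fun j : ℕ => (j : ZMod p)) (↑S ∪ ↑(S.image g)) := by
    rw [← Finset.coe_union]
    apply castInjOn
    intro j hj
    rcases Finset.mem_union.mp hj with h | h
    · exact hS j h
    · obtain ⟨i, _, rfl⟩ := Finset.mem_image.mp h
      exact hmodlt i
  have himg : (S.image (fun j : ℕ => (j : ZMod p))).image (fun x => x + (k : ZMod p))
      = (S.image g).image (fun j : ℕ => (j : ZMod p)) := by
    rw [Finset.image_image, Finset.image_image]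
    apply Finset.image_congr
    intro j _
    simp only [Function.comp_apply, hg]
    rw [ZMod.natCast_mod]
    push_cast
    ring
  rw [himg, ← Finset.image_inter_of_injOn _ _ hcast,
    Finset.card_image_of_injOn (Set.InjOn.mono ?_ hcast)]
  · rw [Finset.inter_comm, ← Finset.filter_mem_eq_inter, Finset.filter_image,
      Finset.card_image_of_injOn (Set.InjOn.mono ?_ hginj)]
    exact Finset.coe_subset.mpr (Finset.filter_subset _ _)
  · intro x hx
    rw [Finset.coe_inter] at hx
    exact Set.mem_union_left _ hx.1

end Aux

section Counts

variable {p : ℕ}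

lemma count_init (hp : 0 < p) (a k : ℕ) (ha : a ≤ p) (hk1 : 1 ≤ k) (hk : k < p) :
    ((initInterval p a) ∩ ((initInterval p a).image (fun x => x + (k : ZMod p)))).card
      = (a - k) + (a - (p - k)) := by
  rw [initInterval, count_general hp _ (fun j hj => lt_of_lt_of_le (Finset.mem_range.mp hj) ha) k]
  have hfil : (Finset.range a).filter (fun j => (j + k) % p ∈ Finset.range a)
      = Finset.range (a - k) ∪ Finset.Ico (p - k) a := by
    ext j
    simp only [Finset.mem_filter, Finset.mem_range, Finset.mem_union, Finset.mem_Ico]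
    constructor
    · rintro ⟨hja, hmod⟩
      rcases lt_or_ge (j + k) p with h | h
      · rw [Nat.mod_eq_of_lt h] at hmod; omega
      · have hm : (j + k) % p = j + k - p := by
          rw [Nat.mod_eq_sub_mod h, Nat.mod_eq_of_lt (by omega)]
        rw [hm] at hmod; omega
    · rintro (h | ⟨h1, h2⟩)
      · refine ⟨by omega, ?_⟩
        rw [Nat.mod_eq_of_lt (by omega)]; omega
      · refine ⟨h2, ?_⟩
        have hm : (j + k) % p = j + k - p := by
          rw [Nat.mod_eq_sub_mod (by omega), Nat.mod_eq_of_lt (by omega)]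
        rw [hm]; omega
  rw [hfil, Finset.card_union_of_disjoint, Finset.card_range, Nat.card_Ico]
  rw [Finset.disjoint_left]
  intro j hj hj'
  rw [Finset.mem_range] at hj
  rw [Finset.mem_Ico] at hj'
  omega

lemma count_punct (hp : 0 < p) (a d : ℕ) (ha3 : 3 ≤ a) (hap : a + 3 ≤ p) (hd : d = 1 ∨ d = 2) :
    ((puncturedInterval p a) ∩ ((puncturedInterval p a).image (fun x => x + (d : ZMod p)))).card
      = a - 2 := by
  have hP : puncturedInterval p a
      = (insert a (Finset.range (a - 1))).image (fun j : ℕ => (j : ZMod p)) := by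
    rw [puncturedInterval, Finset.image_insert]
  set S := insert a (Finset.range (a - 1)) with hSdef
  have hSlt : ∀ j ∈ S, j < p := by
    intro j hj
    rcases Finset.mem_insert.mp hj with rfl | h
    · omega
    · have := Finset.mem_range.mp h; omega
  rw [hP, count_general hp S hSlt d]
  rcases hd with rfl | rfl
  · have hfil : S.filter (fun j => (j + 1) % p ∈ S) = Finset.range (a - 2) := by
      ext j
      simp only [Finset.mem_filter, hSdef, Finset.mem_insert, Finset.mem_range]
      constructor
      · rintro ⟨hj, hcond⟩
        rw [Nat.mod_eq_of_lt (by omega)] at hcond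
        omega
      · intro hj
        refine ⟨by omega, ?_⟩
        rw [Nat.mod_eq_of_lt (by omega)]
        omega
    rw [hfil, Finset.card_range]
  · have hfil : S.filter (fun j => (j + 2) % p ∈ S)
        = insert (a - 2) (Finset.range (a - 3)) := by
      ext j
      simp only [Finset.mem_filter, hSdef, Finset.mem_insert, Finset.mem_range]
      constructor
      · rintro ⟨hj, hcond⟩
        rw [Nat.mod_eq_of_lt (by omega)] at hcond
        omega
      · intro hj
        refine ⟨by omega, ?_⟩
        rw [Nat.mod_eq_of_lt (by omega)]
        omega
    rw [hfil, Finset.card_insert_of_notMem (by simp; omega), Finset.card_range]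
    omega

end Counts

theorem stmt_10 (p : ℕ) (hp : p.Prime) (hp7 : 7 ≤ p) (a : ℕ) (ha : 3 ≤ a) (ha' : a ≤ p - 3) :
    ¬ ∃ (ξ η : ZMod p), ξ ≠ 0 ∧
      (puncturedInterval p a).image (fun x => ξ * x + η) = initInterval p a := by
  rintro ⟨ξ, η, hξ, heq⟩
  have hp0 : 0 < p := hp.pos
  haveI : NeZero p := ⟨hp0.ne'⟩
  haveI := Fact.mk hp
  have hfinj : Function.Injective (fun x : ZMod p => ξ * x + η) := by
    intro x y h
    simp only at h
    exact mul_left_cancel₀ hξ (add_right_cancel h)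
  have key : ∀ d : ZMod p,
      ((initInterval p a) ∩ ((initInterval p a).image (fun x => x + ξ * d))).card
        = ((puncturedInterval p a) ∩ ((puncturedInterval p a).image (fun x => x + d))).card := by
    intro d
    conv_lhs => rw [← heq]
    have h2 : ((puncturedInterval p a).image (fun x => ξ * x + η)).image (fun x => x + ξ * d)
        = ((puncturedInterval p a).image (fun x => x + d)).image (fun x => ξ * x + η) := by
      rw [Finset.image_image, Finset.image_image]
      apply Finset.image_congr
      intro x _
      simp only [Function.comp_apply]
      ring
    rw [h2, ← Finset.image_inter _ _ hfinj, Finset.card_image_of_injective _ hfinj]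
  set k := ξ.val with hk
  have hk1 : 1 ≤ k := by
    rcases Nat.eq_zero_or_pos k with h | h
    · exact absurd ((ZMod.val_eq_zero ξ).mp h) hξ
    · exact h
  have hkp : k < p := ZMod.val_lt ξ
  have hξk : ((k : ℕ) : ZMod p) = ξ := ZMod.natCast_rightInverse ξ
  have e1 := key ((1 : ℕ) : ZMod p)
  rw [count_punct hp0 a 1 ha (by omega) (Or.inl rfl),
    show ξ * ((1 : ℕ) : ZMod p) = ((k : ℕ) : ZMod p) by rw [Nat.cast_one, mul_one, hξk],
    count_init hp0 a k (by omega) hk1 hkp] at e1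
  set k2 := (2 * k) % p with hk2def
  have hk2p : k2 < p := Nat.mod_lt _ hp0
  have hcast2 : ((k2 : ℕ) : ZMod p) = ξ * ((2 : ℕ) : ZMod p) := by
    rw [hk2def, ZMod.natCast_mod]
    push_cast
    rw [hξk]; ring
  have hk21 : 1 ≤ k2 := by
    rcases Nat.eq_zero_or_pos k2 with h | h
    · exfalso
      have hz : ((2 * k : ℕ) : ZMod p) = 0 := by
        rw [← ZMod.natCast_mod, ← hk2def, h]; simp
      have hdvd : p ∣ 2 * k := (ZMod.natCast_eq_zero_iff _ _).mp hz
      rcases (Nat.Prime.dvd_mul hp).mp hdvd with h2 | h2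
      · have := Nat.le_of_dvd (by norm_num) h2; omega
      · have := Nat.le_of_dvd (by omega) h2; omega
    · exact h
  have e2 := key ((2 : ℕ) : ZMod p)
  rw [count_punct hp0 a 2 ha (by omega) (Or.inr rfl), ← hcast2,
    count_init hp0 a k2 (by omega) hk21 hk2p] at e2
  have hcase : k2 = 2 * k ∨ k2 = 2 * k - p := by
    rcases lt_or_ge (2 * k) p with h | h
    · left; rw [hk2def, Nat.mod_eq_of_lt h]
    · right; rw [hk2def, Nat.mod_eq_sub_mod h, Nat.mod_eq_of_lt (by omega)]
  omega
end

section
/- There are at least three pairwise non-affine-equivalent a-subsets of Z_p if and only if (p ≥ 13 and 3 ≤ a ≤ p-3) or (p ≥ 11 and 4 ≤ a ≤ p-4). -/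
/-!
Affine maps `x ↦ ξx + η` of `ZMod p` act on `a`-subsets and commute with complementation, so
`a` and `p - a` behave alike, and they act 2-transitively, so for `a ≤ 2` there is a single class.
There are three classes exactly when the `a`-subsets are not covered by two classes; as a class
has at most `p²` members, three classes exist as soon as `2p² < (p choose a)`, which holds for
`a = 3`, `p ≥ 15` and for `4 ≤ a ≤ p - 4`, `p ≥ 11`. The remaining cases `a = 3`, `p ∈ {7, 11, 13}`
are decided by computation after moving two points of a `3`-set to `0` and `1`.
-/

/-- Two subsets of `ZMod p` are affine equivalent if one is the image of the other
under `x ↦ ξx + η` with `ξ ≠ 0`. -/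
def AffineEquiv' {p : ℕ} (A B : Finset (ZMod p)) : Prop :=
  ∃ ξ η : ZMod p, ξ ≠ 0 ∧ A.image (fun x => ξ * x + η) = B

instance AffineEquiv'.instDecidable {p : ℕ} [NeZero p] (A B : Finset (ZMod p)) :
    Decidable (AffineEquiv' A B) :=
  inferInstanceAs (Decidable (∃ ξ η : ZMod p, ξ ≠ 0 ∧ A.image (fun x => ξ * x + η) = B))

def HasThreeAffineClasses (p a : ℕ) : Prop :=
  ∃ A B C : Finset (ZMod p), A.card = a ∧ B.card = a ∧ C.card = a ∧
    ¬ AffineEquiv' A B ∧ ¬ AffineEquiv' A C ∧ ¬ AffineEquiv' B C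

def AtMostTwoAffineClasses (p a : ℕ) : Prop :=
  ∃ S₁ S₂ : Finset (ZMod p), ∀ A : Finset (ZMod p), A.card = a →
    AffineEquiv' A S₁ ∨ AffineEquiv' A S₂

lemma bijective_mul_add {K : Type*} [Field K] {ξ : K} (hξ : ξ ≠ 0) (η : K) :
    Function.Bijective fun x => ξ * x + η :=
  ((Equiv.mulLeft₀ ξ hξ).trans (Equiv.addRight η)).bijective

lemma Nat.choose_le_choose_of_le_of_le_half {n r a : ℕ} (hra : r ≤ a) (ha : a ≤ n / 2) :
    n.choose r ≤ n.choose a := by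
  induction a, hra using Nat.le_induction with
  | base => rfl
  | succ k _ ih => exact (ih (by omega)).trans (Nat.choose_le_succ_of_lt_half_left (by omega))

lemma Nat.choose_le_choose_of_le_of_le_sub {n r a : ℕ} (hra : r ≤ a) (han : a ≤ n - r) :
    n.choose r ≤ n.choose a := by
  by_cases ha : a ≤ n / 2
  · exact Nat.choose_le_choose_of_le_of_le_half hra ha
  · rw [← Nat.choose_symm (han.trans (Nat.sub_le n r))]
    exact Nat.choose_le_choose_of_le_of_le_half (by omega) (by omega)

lemma two_mul_sq_lt_choose_three {p : ℕ} (hp : 15 ≤ p) : 2 * p ^ 2 < p.choose 3 := by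
  obtain ⟨m, rfl⟩ := Nat.exists_eq_add_of_le' hp
  have h : (m + 13) * ((m + 14) * ((m + 15) * 1)) = 6 * (m + 15).choose 3 :=
    Nat.descFactorial_eq_factorial_mul_choose (m + 15) 3
  nlinarith

lemma two_mul_sq_lt_choose_four {p : ℕ} (hp : 11 ≤ p) : 2 * p ^ 2 < p.choose 4 := by
  obtain ⟨m, rfl⟩ := Nat.exists_eq_add_of_le' hp
  have h : (m + 8) * ((m + 9) * ((m + 10) * ((m + 11) * 1))) = 24 * (m + 11).choose 4 :=
    Nat.descFactorial_eq_factorial_mul_choose (m + 11) 4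
  nlinarith [sq_nonneg m, sq_nonneg (m * m)]

namespace AffineEquiv'

variable {p : ℕ} [Fact p.Prime] {A B C : Finset (ZMod p)}

protected lemma refl (A : Finset (ZMod p)) : AffineEquiv' A A :=
  ⟨1, 0, one_ne_zero, by simp⟩

protected lemma symm (h : AffineEquiv' A B) : AffineEquiv' B A := by
  obtain ⟨ξ, η, hξ, rfl⟩ := h
  refine ⟨ξ⁻¹, -(ξ⁻¹ * η), inv_ne_zero hξ, ?_⟩
  rw [Finset.image_image]
  refine (Finset.image_congr fun x _ => ?_).trans Finset.image_id
  simp only [Function.comp_apply, id_eq, mul_add, inv_mul_cancel_left₀ hξ]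
  ring

protected lemma trans (h₁ : AffineEquiv' A B) (h₂ : AffineEquiv' B C) : AffineEquiv' A C := by
  obtain ⟨ξ₁, η₁, hξ₁, rfl⟩ := h₁
  obtain ⟨ξ₂, η₂, hξ₂, rfl⟩ := h₂
  refine ⟨ξ₂ * ξ₁, ξ₂ * η₁ + η₂, mul_ne_zero hξ₂ hξ₁, ?_⟩
  rw [Finset.image_image]
  exact Finset.image_congr fun x _ => by simp only [Function.comp_apply]; ring

lemma compl (h : AffineEquiv' A B) : AffineEquiv' Aᶜ Bᶜ := by
  obtain ⟨ξ, η, hξ, rfl⟩ := h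
  refine ⟨ξ, η, hξ, Finset.coe_injective ?_⟩
  push_cast
  exact Set.image_compl_eq (bijective_mul_add hξ η)

lemma insert_insert_zero_one {x y : ZMod p} (hxy : x ≠ y) (s : Finset (ZMod p)) :
    AffineEquiv' (insert x (insert y s))
      (insert 0 (insert 1 (s.image fun z => (y - x)⁻¹ * (z - x)))) := by
  have hyx : y - x ≠ 0 := sub_ne_zero.mpr hxy.symm
  refine ⟨(y - x)⁻¹, -((y - x)⁻¹ * x), inv_ne_zero hyx, ?_⟩
  have h₁ : (y - x)⁻¹ * y + -((y - x)⁻¹ * x) = 1 := by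
    rw [← mul_neg, ← mul_add, ← sub_eq_add_neg, inv_mul_cancel₀ hyx]
  rw [Finset.image_insert, Finset.image_insert, h₁, add_neg_cancel]
  congr 3 with z
  ring

lemma of_card_eq_of_card_le_two (hAB : A.card = B.card) (h2 : A.card ≤ 2) :
    AffineEquiv' A B := by
  obtain h0 | h1 | h2 : A.card = 0 ∨ A.card = 1 ∨ A.card = 2 := by omega
  · rw [Finset.card_eq_zero.mp h0, Finset.card_eq_zero.mp (hAB.symm.trans h0)]
    exact .refl _
  · obtain ⟨x, rfl⟩ := Finset.card_eq_one.mp h1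
    obtain ⟨y, rfl⟩ := Finset.card_eq_one.mp (hAB ▸ h1)
    exact ⟨1, y - x, one_ne_zero, by simp⟩
  · obtain ⟨x₁, x₂, hx, rfl⟩ := Finset.card_eq_two.mp h2
    obtain ⟨y₁, y₂, hy, rfl⟩ := Finset.card_eq_two.mp (hAB ▸ h2)
    have hA := insert_insert_zero_one hx ∅
    have hB := insert_insert_zero_one hy ∅
    simp only [Finset.image_empty] at hA hB
    exact hA.trans hB.symm

lemma exists_zero_one (hA : A.card = 3) :
    ∃ l : ZMod p, l ≠ 0 ∧ l ≠ 1 ∧ AffineEquiv' A {0, 1, l} := by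
  obtain ⟨x, y, z, hxy, hxz, hyz, rfl⟩ := Finset.card_eq_three.mp hA
  have hyx : y - x ≠ 0 := sub_ne_zero.mpr hxy.symm
  refine ⟨(y - x)⁻¹ * (z - x), mul_ne_zero (inv_ne_zero hyx) (sub_ne_zero.mpr hxz.symm),
    fun h => hyz (sub_left_injective ((inv_mul_eq_one₀ hyx).mp h)), ?_⟩
  simpa using insert_insert_zero_one hxy {z}

end AffineEquiv'

section Counting

variable {p : ℕ} [NeZero p]

-- The maps with `ξ = 0` are included too: only an upper bound on the class size is needed.
def affineImages (A : Finset (ZMod p)) : Finset (Finset (ZMod p)) :=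
  (Finset.univ : Finset (ZMod p × ZMod p)).image fun q => A.image fun x => q.1 * x + q.2

lemma card_affineImages_le (A : Finset (ZMod p)) : (affineImages A).card ≤ p ^ 2 :=
  Finset.card_image_le.trans_eq (by simp [sq])

lemma AffineEquiv'.mem_affineImages {A B : Finset (ZMod p)} (h : AffineEquiv' A B) :
    B ∈ affineImages A := by
  obtain ⟨ξ, η, -, rfl⟩ := h
  exact Finset.mem_image.mpr ⟨(ξ, η), Finset.mem_univ _, rfl⟩

lemma AtMostTwoAffineClasses.choose_le [Fact p.Prime] {a : ℕ}
    (h : AtMostTwoAffineClasses p a) : p.choose a ≤ 2 * p ^ 2 := by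
  obtain ⟨S₁, S₂, hS⟩ := h
  have hsub : Finset.univ.powersetCard a ⊆ affineImages S₁ ∪ affineImages S₂ := by
    intro A hA
    rcases hS A (Finset.mem_powersetCard.mp hA).2 with h | h
    · exact Finset.mem_union_left _ h.symm.mem_affineImages
    · exact Finset.mem_union_right _ h.symm.mem_affineImages
  calc p.choose a = (Finset.univ.powersetCard a : Finset (Finset (ZMod p))).card := by simp
    _ ≤ (affineImages S₁ ∪ affineImages S₂).card := Finset.card_le_card hsub
    _ ≤ (affineImages S₁).card + (affineImages S₂).card := Finset.card_union_le _ _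
    _ ≤ 2 * p ^ 2 := by linarith [card_affineImages_le S₁, card_affineImages_le S₂]

end Counting

section Classes

variable {p a : ℕ} [Fact p.Prime]

lemma hasThreeAffineClasses_iff_not_atMostTwo :
    HasThreeAffineClasses p a ↔ ¬ AtMostTwoAffineClasses p a := by
  constructor
  · rintro ⟨A, B, C, hA, hB, hC, hAB, hAC, hBC⟩ ⟨S₁, S₂, hS⟩
    rcases hS A hA with h₁ | h₁ <;> rcases hS B hB with h₂ | h₂ <;>
      rcases hS C hC with h₃ | h₃
    all_goals first
      | exact hAB (h₁.trans h₂.symm)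
      | exact hAC (h₁.trans h₃.symm)
      | exact hBC (h₂.trans h₃.symm)
  · intro h
    simp only [AtMostTwoAffineClasses, not_exists, not_forall, not_or] at h
    obtain ⟨A, hA, -⟩ := h ∅ ∅
    obtain ⟨B, hB, hBA, -⟩ := h A A
    obtain ⟨C, hC, hCA, hCB⟩ := h A B
    exact ⟨A, B, C, hA, hB, hC, fun e => hBA e.symm, fun e => hCA e.symm, fun e => hCB e.symm⟩

lemma HasThreeAffineClasses.of_two_mul_sq_lt_choose (h : 2 * p ^ 2 < p.choose a) :
    HasThreeAffineClasses p a :=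
  hasThreeAffineClasses_iff_not_atMostTwo.mpr fun h₂ => h₂.choose_le.not_gt h

lemma HasThreeAffineClasses.compl (h : HasThreeAffineClasses p a) :
    HasThreeAffineClasses p (p - a) := by
  obtain ⟨A, B, C, hA, hB, hC, hAB, hAC, hBC⟩ := h
  have card_compl (S : Finset (ZMod p)) : Sᶜ.card = p - S.card := by
    rw [Finset.card_compl, ZMod.card]
  refine ⟨Aᶜ, Bᶜ, Cᶜ, by rw [card_compl, hA], by rw [card_compl, hB],
    by rw [card_compl, hC], fun e => hAB ?_, fun e => hAC ?_, fun e => hBC ?_⟩ <;>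
    simpa using e.compl

lemma HasThreeAffineClasses.three_le (h : HasThreeAffineClasses p a) : 3 ≤ a := by
  obtain ⟨A, B, -, hA, hB, -, hAB, -⟩ := h
  by_contra! ha
  exact hAB (.of_card_eq_of_card_le_two (hA.trans hB.symm) (by omega))

lemma HasThreeAffineClasses.le_sub_three (h : HasThreeAffineClasses p a) : a ≤ p - 3 := by
  have := h.compl.three_le
  obtain ⟨A, -, -, hA, -⟩ := h
  have : a ≤ p := hA ▸ (Finset.card_le_univ A).trans_eq (ZMod.card p)
  omega

lemma atMostTwoAffineClasses_three_of_forall {S₁ S₂ : Finset (ZMod p)}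
    (h : ∀ l : ZMod p, l ≠ 0 → l ≠ 1 →
      AffineEquiv' {0, 1, l} S₁ ∨ AffineEquiv' {0, 1, l} S₂) :
    AtMostTwoAffineClasses p 3 := by
  refine ⟨S₁, S₂, fun A hA => ?_⟩
  obtain ⟨l, hl₀, hl₁, hAl⟩ := AffineEquiv'.exists_zero_one hA
  exact (h l hl₀ hl₁).imp hAl.trans hAl.trans

end Classes

lemma atMostTwoAffineClasses_three {p : ℕ} (hp : p = 7 ∨ p = 11) :
    AtMostTwoAffineClasses p 3 := by
  rcases hp with rfl | rfl
  · have : Fact (Nat.Prime 7) := ⟨by norm_num⟩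
    exact atMostTwoAffineClasses_three_of_forall (S₁ := {0, 1, 2}) (S₂ := {0, 1, 3})
      (by decide +revert)
  · have : Fact (Nat.Prime 11) := ⟨by norm_num⟩
    exact atMostTwoAffineClasses_three_of_forall (S₁ := {0, 1, 2}) (S₂ := {0, 1, 3})
      (by decide +revert)

lemma hasThreeAffineClasses_thirteen_three : HasThreeAffineClasses 13 3 :=
  ⟨{0, 1, 2}, {0, 1, 3}, {0, 1, 4}, by decide⟩

lemma hasThreeAffineClasses_three {p : ℕ} [Fact p.Prime] (hp : 13 ≤ p) :
    HasThreeAffineClasses p 3 := by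
  obtain rfl | rfl | hp15 : p = 13 ∨ p = 14 ∨ 15 ≤ p := by omega
  · exact hasThreeAffineClasses_thirteen_three
  · exact absurd Fact.out (by norm_num : ¬ Nat.Prime 14)
  · exact .of_two_mul_sq_lt_choose (two_mul_sq_lt_choose_three hp15)

lemma HasThreeAffineClasses.of_four_le {p a : ℕ} [Fact p.Prime] (hp : 11 ≤ p) (h4 : 4 ≤ a)
    (ha : a ≤ p - 4) : HasThreeAffineClasses p a :=
  .of_two_mul_sq_lt_choose
    ((two_mul_sq_lt_choose_four hp).trans_le (Nat.choose_le_choose_of_le_of_le_sub h4 ha))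

lemma not_hasThreeAffineClasses_three {p : ℕ} [Fact p.Prime] (hp : p = 7 ∨ p = 11) :
    ¬ HasThreeAffineClasses p 3 :=
  hasThreeAffineClasses_iff_not_atMostTwo.not_left.mpr (atMostTwoAffineClasses_three hp)

theorem stmt_17 (p : ℕ) (hp : p.Prime) (a : ℕ) :
    (∃ A B C : Finset (ZMod p), A.card = a ∧ B.card = a ∧ C.card = a ∧
      ¬ AffineEquiv' A B ∧ ¬ AffineEquiv' A C ∧ ¬ AffineEquiv' B C) ↔
    ((13 ≤ p ∧ 3 ≤ a ∧ a ≤ p - 3) ∨ (11 ≤ p ∧ 4 ≤ a ∧ a ≤ p - 4)) := by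
  have : Fact p.Prime := ⟨hp⟩
  change HasThreeAffineClasses p a ↔ _
  constructor
  · intro h
    have h₃ := h.three_le
    have h₃' := h.le_sub_three
    by_contra hcon
    have hp' : p = 7 ∨ p = 11 := by
      have : p < 13 := by omega
      interval_cases p <;> first | omega | norm_num at hp
    obtain rfl | rfl : a = 3 ∨ a = p - 3 := by omega
    · exact not_hasThreeAffineClasses_three hp' h
    · exact not_hasThreeAffineClasses_three hp' ((by omega : p - (p - 3) = 3) ▸ h.compl)
  · rintro (⟨hp13, h3, h3'⟩ | ⟨hp11, h4, h4'⟩)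
    · obtain rfl | rfl | h4 : a = 3 ∨ a = p - 3 ∨ 4 ≤ a ∧ a ≤ p - 4 := by omega
      · exact hasThreeAffineClasses_three hp13
      · exact (hasThreeAffineClasses_three hp13).compl
      · exact .of_four_le (by omega) h4.1 h4.2
    · exact .of_four_le hp11 h4 h4'
end
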